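/- Let a_{ij}, h_{i s̄}, W^s_{ik l̄} be complex numbers (indices in {1,2}) satisfying the identity ε_{ki} conj(a_{jl}) − conj(ε_{lj}) a_{ik} = conj(h_{j s̄}) W^s_{ik l̄} − h_{i s̄} conj(W^s_{jl k̄}) for all i,j,k,l, where ε is the antisymmetric symbol with ε_{12} = 1 and summation over s is implied. Assume W is symmetric in its two lower unbarred indices (W^s_{ik l̄} = W^s_{ki l̄}), trace-free (W^l_{lk j̄} = 0), and h is Hermitian (h_{i j̄} = conj(h_{j ī})). Then the number h := −(1/2) conj(ε^{ij} a_{ij}) (where ε^{12} = 1 is the inverse antisymmetric symbol, summation over i,j) is real. -/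

import Mathlib

/-!
Contract the identity with `ε^{ik} conj(ε^{jl})`. On the left, `ε^{ik} ε_{ki} = -2` turns the two
terms into `2 (ε^{ij} a_{ij}) - 2 conj(ε^{ij} a_{ij})`. On the right, the first term vanishes because
`ε^{ik}` is contracted against `W^s_{ik l̄}`, which is symmetric in `i, k`, and the second because
`conj(ε^{jl})` meets `conj(W^s_{jl k̄})`, symmetric in `j, l`.
-/

/-- The antisymmetric symbol on two indices, with ε₁₂ = 1 (indices shifted to {0,1}). -/
def eps : Fin 2 → Fin 2 → ℂ := fun i j =>
  if i = 0 ∧ j = 1 then 1 else if i = 1 ∧ j = 0 then -1 else 0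

open ComplexConjugate

lemma sum_eps_mul_eq_zero_of_symm {T : Fin 2 → Fin 2 → ℂ} (hT : ∀ i k, T i k = T k i) :
    ∑ i, ∑ k, eps i k * T i k = 0 := by
  simp [Fin.sum_univ_two, eps, hT 1 0]

lemma sum_eps_mul_eps_mul_sum_eq_zero (X : Fin 2 → Fin 2 → ℂ) {V : Fin 2 → Fin 2 → Fin 2 → Fin 2 → ℂ}
    (hV : ∀ s i k l, V s i k l = V s k i l) :
    ∑ i, ∑ j, ∑ k, ∑ l, eps i k * eps j l * ∑ s, X j s * V s i k l = 0 :=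
  calc _ = ∑ j, ∑ l, ∑ s, eps j l * X j s * ∑ i, ∑ k, eps i k * V s i k l := by
        simp only [Fin.sum_univ_two]; ring
    _ = 0 := by
        have hzero s l : ∑ i, ∑ k, eps i k * V s i k l = 0 :=
          sum_eps_mul_eq_zero_of_symm (hV s · · l)
        simp only [hzero, mul_zero, Finset.sum_const_zero]

lemma sum_eps_mul_eps_mul_eps_conj_sub_eq (a : Fin 2 → Fin 2 → ℂ) :
    ∑ i, ∑ j, ∑ k, ∑ l, eps i k * eps j l * (eps k i * conj (a j l) - conj (eps l j) * a i k)
      = 2 * ∑ i, ∑ j, eps i j * a i j - 2 * conj (∑ i, ∑ j, eps i j * a i j) := by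
  simp [Fin.sum_univ_two, eps]
  ring

theorem trace_part_real_general (a h : Fin 2 → Fin 2 → ℂ) (W : Fin 2 → Fin 2 → Fin 2 → Fin 2 → ℂ)
    (hWsym : ∀ s i k l, W s i k l = W s k i l)
    (hident : ∀ i j k l,
      eps k i * (starRingEnd ℂ) (a j l) - (starRingEnd ℂ) (eps l j) * a i k
        = (∑ s, (starRingEnd ℂ) (h j s) * W s i k l)
          - ∑ s, h i s * (starRingEnd ℂ) (W s j l k)) :
    (starRingEnd ℂ) (-(1/2 : ℂ) * (starRingEnd ℂ) (∑ i, ∑ j, eps i j * a i j))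
      = -(1/2 : ℂ) * (starRingEnd ℂ) (∑ i, ∑ j, eps i j * a i j) := by
  set t := ∑ i, ∑ j, eps i j * a i j
  have hfirst := sum_eps_mul_eps_mul_sum_eq_zero (fun j s => conj (h j s)) hWsym
  have hsecond : ∑ i, ∑ j, ∑ k, ∑ l, eps i k * eps j l * ∑ s, h i s * conj (W s j l k) = 0 := by
    rw [← sum_eps_mul_eps_mul_sum_eq_zero h (V := fun s j l k => conj (W s j l k))
      (fun s j l k => by rw [hWsym])]
    simp only [Fin.sum_univ_two]; ring
  have hcontr : 2 * t - 2 * conj t = 0 := by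
    rw [← sum_eps_mul_eps_mul_eps_conj_sub_eq]
    simp only [hident, mul_sub, Finset.sum_sub_distrib, hfirst, hsecond, sub_zero]
  have ht : conj t = t := by linear_combination -hcontr / 2
  simp [ht, map_ofNat]

/-- In the first prolongation of the Kähler metrisability equations, the trace part
`h = −(1/2) conj(ε^{ij} a_{ij})` of the coefficients `a` is real. -/
theorem trace_part_real (a h : Fin 2 → Fin 2 → ℂ) (W : Fin 2 → Fin 2 → Fin 2 → Fin 2 → ℂ)
    (hWsym : ∀ s i k l, W s i k l = W s k i l)
    (hWtrace : ∀ k j, (∑ l, W l l k j) = 0)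
    (hherm : ∀ i j, h i j = (starRingEnd ℂ) (h j i))
    (hident : ∀ i j k l,
      eps k i * (starRingEnd ℂ) (a j l) - (starRingEnd ℂ) (eps l j) * a i k
        = (∑ s, (starRingEnd ℂ) (h j s) * W s i k l)
          - ∑ s, h i s * (starRingEnd ℂ) (W s j l k)) :
    (starRingEnd ℂ) (-(1/2 : ℂ) * (starRingEnd ℂ) (∑ i, ∑ j, eps i j * a i j))
      = -(1/2 : ℂ) * (starRingEnd ℂ) (∑ i, ∑ j, eps i j * a i j) :=
  trace_part_real_general a h W hWsym hident
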